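/- arXiv:2305.18659 — 3 statements merged into one kernel-verified Lean document; each statement's English description precedes it below -/
import Mathlib

section
/- Let Ω = B₁ ⊆ ℝⁿ, Ω± = B₁∩{±xₙ>0}, Γ = B₁∩{xₙ=0}. Let H₋ be a degenerate elliptic second-order operator on Ω₋∪Γ and H₊ a degenerate elliptic second-order operator on Ω₊∪Γ that is uniformly elliptic with respect to some [λ,Λ] ⊆ (0,∞). Suppose u ∈ C(B₁) has the property that for every x₀ ∈ B₁, every r > 0 with B_r(x₀) ⊆ B₁, and every φ ∈ C(B_r(x₀)) whose restrictions φ₋ to B_r(x₀)∩{xₙ≤0} and φ₊ to B_r(x₀)∩{xₙ≥0} are C² up to Γ, if φ touches u from above at x₀ then: H₋φ(x₀) ≤ 0 when x₀ ∈ Ω₋; H₊φ(x₀) ≤ 0 when x₀ ∈ Ω₊; and min( H₋(D²φ₊(x₀), Dφ₊(x₀), φ(x₀), x₀), ∂ₙφ₋(x₀) − ∂ₙφ₊(x₀) ) ≤ 0 when x₀ ∈ Γ. Then u is a viscosity sub-solution of the strong problem {H₋u ≤ 0 in Ω₋∪Γ, H₊u ≤ 0 in Ω₊}. -/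
open Metric Set Filter Topology Bornology

noncomputable section

abbrev Euc (n : ℕ) := EuclideanSpace ℝ (Fin n)

/-- Hessian matrix of a function at a point (second iterated Fréchet derivative,
a purely local notion). -/
def hessianMatrix {n : ℕ} (φ : Euc n → ℝ) (x : Euc n) : Matrix (Fin n) (Fin n) ℝ :=
  Matrix.of fun i j =>
    iteratedFDeriv ℝ 2 φ x ![EuclideanSpace.single i (1 : ℝ), EuclideanSpace.single j (1 : ℝ)]

/-- Evaluation of a second-order operator on a C² function. -/
def evalOp2 {n : ℕ} (H : Matrix (Fin n) (Fin n) ℝ → Euc n → ℝ → Euc n → ℝ)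
    (φ : Euc n → ℝ) (x : Euc n) : ℝ :=
  H (hessianMatrix φ x) (gradient φ x) (φ x) x

/-- Degenerate ellipticity of a second-order operator on `S`. -/
def DegElliptic2 {n : ℕ} (S : Set (Euc n))
    (H : Matrix (Fin n) (Fin n) ℝ → Euc n → ℝ → Euc n → ℝ) : Prop :=
  ∀ M₁ M₂ : Matrix (Fin n) (Fin n) ℝ, ∀ p : Euc n, ∀ z₁ z₂ : ℝ, ∀ x ∈ S,
    (M₁ - M₂).PosSemidef → z₁ ≤ z₂ → H M₁ p z₁ x ≤ H M₂ p z₂ x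

/-- Continuity of a second-order operator on `Sym × ℝⁿ × ℝ × S`. -/
def ContinuousOp2 {n : ℕ} (S : Set (Euc n))
    (H : Matrix (Fin n) (Fin n) ℝ → Euc n → ℝ → Euc n → ℝ) : Prop :=
  ContinuousOn
    (fun q : (Matrix (Fin n) (Fin n) ℝ) × Euc n × ℝ × Euc n => H q.1 q.2.1 q.2.2.1 q.2.2.2)
    (univ ×ˢ univ ×ˢ univ ×ˢ S)

/-- The set of symmetric matrices `A` with `λ I ≤ A ≤ Λ I`. -/
def pucciSet (n : ℕ) (l L : ℝ) : Set (Matrix (Fin n) (Fin n) ℝ) :=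
  {A | (A - l • (1 : Matrix (Fin n) (Fin n) ℝ)).PosSemidef ∧
       ((L • (1 : Matrix (Fin n) (Fin n) ℝ)) - A).PosSemidef}

/-- Pucci maximal operator `𝓜⁺_{λ,Λ}`. -/
def pucciPlus {n : ℕ} (l L : ℝ) (M : Matrix (Fin n) (Fin n) ℝ) : ℝ :=
  sSup ((fun A : Matrix (Fin n) (Fin n) ℝ => -(A * M).trace) '' pucciSet n l L)

/-- Pucci minimal operator `𝓜⁻_{λ,Λ}`. -/
def pucciMinus {n : ℕ} (l L : ℝ) (M : Matrix (Fin n) (Fin n) ℝ) : ℝ :=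
  sInf ((fun A : Matrix (Fin n) (Fin n) ℝ => -(A * M).trace) '' pucciSet n l L)

/-- Uniform ellipticity of a second-order operator with respect to `[λ, Λ]` on `S`. -/
def UnifElliptic2 {n : ℕ} (l L : ℝ) (S : Set (Euc n))
    (H : Matrix (Fin n) (Fin n) ℝ → Euc n → ℝ → Euc n → ℝ) : Prop :=
  ∀ M₁ M₂ : Matrix (Fin n) (Fin n) ℝ, ∀ p₁ p₂ : Euc n, ∀ z₁ z₂ : ℝ, ∀ x ∈ S,
    pucciMinus l L (M₂ - M₁) - L * ‖p₂ - p₁‖ - L * max (-(z₂ - z₁)) 0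
        ≤ H M₂ p₂ z₂ x - H M₁ p₁ z₁ x ∧
      H M₂ p₂ z₂ x - H M₁ p₁ z₁ x
        ≤ pucciPlus l L (M₂ - M₁) + L * ‖p₂ - p₁‖ + L * max (z₂ - z₁) 0

/-- `φ` is an admissible C² test function touching `u` from above at `x₀` on `ball x₀ r ⊆ Ω`. -/
def SubTest {n : ℕ} (Ω : Set (Euc n)) (u : Euc n → ℝ) (x₀ : Euc n)
    (φ : Euc n → ℝ) (r : ℝ) : Prop :=
  0 < r ∧ ball x₀ r ⊆ Ω ∧ ContDiffOn ℝ 2 φ (ball x₀ r) ∧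
    (∀ x ∈ ball x₀ r, u x ≤ φ x) ∧ u x₀ = φ x₀

/-- `φ` is an admissible C² test function touching `u` from below at `x₀` on `ball x₀ r ⊆ Ω`. -/
def SupTest {n : ℕ} (Ω : Set (Euc n)) (u : Euc n → ℝ) (x₀ : Euc n)
    (φ : Euc n → ℝ) (r : ℝ) : Prop :=
  0 < r ∧ ball x₀ r ⊆ Ω ∧ ContDiffOn ℝ 2 φ (ball x₀ r) ∧
    (∀ x ∈ ball x₀ r, φ x ≤ u x) ∧ u x₀ = φ x₀

/-- Viscosity sub-solution of the strong problem `{H₋u ≤ 0 in Ω₋∪Γ, H₊u ≤ 0 in Ω₊}`. -/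
def StrongSub2 {n : ℕ} (Ω Ωm Ωp Γ : Set (Euc n))
    (Hm Hp : Matrix (Fin n) (Fin n) ℝ → Euc n → ℝ → Euc n → ℝ) (u : Euc n → ℝ) : Prop :=
  ∀ x₀ : Euc n, ∀ φ : Euc n → ℝ, ∀ r : ℝ, SubTest Ω u x₀ φ r →
    (x₀ ∈ Ωm ∪ Γ → evalOp2 Hm φ x₀ ≤ 0) ∧ (x₀ ∈ Ωp → evalOp2 Hp φ x₀ ≤ 0)

/-- Viscosity super-solution of the strong problem `{H₋u ≥ 0 in Ω₋∪Γ, H₊u ≥ 0 in Ω₊}`. -/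
def StrongSuper2 {n : ℕ} (Ω Ωm Ωp Γ : Set (Euc n))
    (Hm Hp : Matrix (Fin n) (Fin n) ℝ → Euc n → ℝ → Euc n → ℝ) (u : Euc n → ℝ) : Prop :=
  ∀ x₀ : Euc n, ∀ φ : Euc n → ℝ, ∀ r : ℝ, SupTest Ω u x₀ φ r →
    (x₀ ∈ Ωm ∪ Γ → 0 ≤ evalOp2 Hm φ x₀) ∧ (x₀ ∈ Ωp → 0 ≤ evalOp2 Hp φ x₀)

/-- Gradient within a set, as a vector of `ℝⁿ`. -/
def gradWithinE {n : ℕ} (S : Set (Euc n)) (φ : Euc n → ℝ) (x : Euc n) : Euc n :=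
  (EuclideanSpace.equiv (Fin n) ℝ).symm fun i =>
    fderivWithin ℝ φ S x (EuclideanSpace.single i (1 : ℝ))

/-- Hessian matrix within a set. -/
def hessWithinE {n : ℕ} (S : Set (Euc n)) (φ : Euc n → ℝ) (x : Euc n) :
    Matrix (Fin n) (Fin n) ℝ :=
  Matrix.of fun i j =>
    fderivWithin ℝ (fun y => fderivWithin ℝ φ S y) S x (EuclideanSpace.single i (1 : ℝ))
      (EuclideanSpace.single j (1 : ℝ))

/-- Normal (last-coordinate) derivative within a set. -/
def dnWithin {n : ℕ} (S : Set (Euc (n + 1))) (φ : Euc (n + 1) → ℝ) (x : Euc (n + 1)) : ℝ :=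
  fderivWithin ℝ φ S x (EuclideanSpace.single (Fin.last n) (1 : ℝ))

/-- `B₁ ∩ {xₙ < 0}`. -/
def flatOmegaM (n : ℕ) : Set (Euc (n + 1)) := ball 0 1 ∩ {x | x (Fin.last n) < 0}
/-- `B₁ ∩ {xₙ > 0}`. -/
def flatOmegaP (n : ℕ) : Set (Euc (n + 1)) := ball 0 1 ∩ {x | 0 < x (Fin.last n)}
/-- `B₁ ∩ {xₙ = 0}`. -/
def flatGamma (n : ℕ) : Set (Euc (n + 1)) := ball 0 1 ∩ {x | x (Fin.last n) = 0}
/-- `B₁ ∩ {xₙ ≤ 0}`. -/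
def flatSm (n : ℕ) : Set (Euc (n + 1)) := ball 0 1 ∩ {x | x (Fin.last n) ≤ 0}
/-- `B₁ ∩ {xₙ ≥ 0}`. -/
def flatSp (n : ℕ) : Set (Euc (n + 1)) := ball 0 1 ∩ {x | 0 ≤ x (Fin.last n)}

section Aux
variable {m : ℕ}

noncomputable def hessE (φ : Euc m → ℝ) (x : Euc m) : Matrix (Fin m) (Fin m) ℝ :=
  Matrix.of fun i j =>
    fderiv ℝ (fderiv ℝ φ) x (EuclideanSpace.single i (1:ℝ)) (EuclideanSpace.single j (1:ℝ))

noncomputable def gradE (φ : Euc m → ℝ) (x : Euc m) : Euc m :=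
  (EuclideanSpace.equiv (Fin m) ℝ).symm fun i => fderiv ℝ φ x (EuclideanSpace.single i (1:ℝ))

lemma coord_abs_le_norm (v : Euc m) (i : Fin m) : |v i| ≤ ‖v‖ := by
  have h := abs_real_inner_le_norm v (EuclideanSpace.single i (1:ℝ))
  rw [EuclideanSpace.inner_single_right] at h
  simpa using h

lemma hessianMatrix_eq_hessE (φ : Euc m → ℝ) (x : Euc m) : hessianMatrix φ x = hessE φ x := by
  ext i j
  simp [hessianMatrix, hessE, iteratedFDeriv_two_apply]

lemma gradient_eq_gradE (φ : Euc m → ℝ) (x : Euc m) : gradient φ x = gradE φ x := by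
  ext i
  have h1 : (gradient φ x) i
      = inner (𝕜 := ℝ) (gradient φ x) (EuclideanSpace.single i (1:ℝ)) := by
    rw [EuclideanSpace.inner_single_right]; simp
  rw [h1, gradient, InnerProductSpace.toDual_symm_apply]
  rfl

lemma fderivWithin_eq_of_convex {S U : Set (Euc m)} (hconv : Convex ℝ S)
    (hint : (interior S).Nonempty) (hSU : S ⊆ U) (hU : IsOpen U)
    {φ g : Euc m → ℝ} (hg : ContDiffOn ℝ 2 g U) (hfg : Set.EqOn φ g S)
    {y : Euc m} (hy : y ∈ S) : fderivWithin ℝ φ S y = fderiv ℝ g y := by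
  have hdg : DifferentiableAt ℝ g y :=
    (hg.differentiableOn (by norm_num)).differentiableAt (hU.mem_nhds (hSU hy))
  have huu : UniqueDiffWithinAt ℝ S y :=
    uniqueDiffWithinAt_convex hconv hint (subset_closure hy)
  rw [fderivWithin_congr hfg (hfg hy)]
  exact hdg.fderivWithin huu

lemma gradWithinE_eq {S U : Set (Euc m)} (hconv : Convex ℝ S)
    (hint : (interior S).Nonempty) (hSU : S ⊆ U) (hU : IsOpen U)
    {φ g : Euc m → ℝ} (hg : ContDiffOn ℝ 2 g U) (hfg : Set.EqOn φ g S)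
    {x : Euc m} (hx : x ∈ S) : gradWithinE S φ x = gradE g x := by
  unfold gradWithinE gradE
  congr 1
  funext i
  rw [fderivWithin_eq_of_convex hconv hint hSU hU hg hfg hx]

lemma hessWithinE_eq {S U : Set (Euc m)} (hconv : Convex ℝ S)
    (hint : (interior S).Nonempty) (hSU : S ⊆ U) (hU : IsOpen U)
    {φ g : Euc m → ℝ} (hg : ContDiffOn ℝ 2 g U) (hfg : Set.EqOn φ g S)
    {x : Euc m} (hx : x ∈ S) : hessWithinE S φ x = hessE g x := by
  have key : fderivWithin ℝ (fun y => fderivWithin ℝ φ S y) S x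
      = fderiv ℝ (fderiv ℝ g) x := by
    have h1 : fderivWithin ℝ (fun y => fderivWithin ℝ φ S y) S x
        = fderivWithin ℝ (fderiv ℝ g) S x :=
      fderivWithin_congr (fun y hy => fderivWithin_eq_of_convex hconv hint hSU hU hg hfg hy)
        (fderivWithin_eq_of_convex hconv hint hSU hU hg hfg hx)
    have hg1 : ContDiffOn ℝ 1 (fderiv ℝ g) U := hg.fderiv_of_isOpen hU (by norm_num)
    have hd : DifferentiableAt ℝ (fderiv ℝ g) x :=
      (hg1.differentiableOn (by norm_num)).differentiableAt (hU.mem_nhds (hSU hx))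
    rw [h1]
    exact hd.fderivWithin (uniqueDiffWithinAt_convex hconv hint (subset_closure hx))
  ext i j
  show fderivWithin ℝ (fun y => fderivWithin ℝ φ S y) S x _ _ = _
  rw [key]
  rfl

lemma dnWithin_eq {n : ℕ} {S U : Set (Euc (n+1))} (hconv : Convex ℝ S)
    (hint : (interior S).Nonempty) (hSU : S ⊆ U) (hU : IsOpen U)
    {φ g : Euc (n+1) → ℝ} (hg : ContDiffOn ℝ 2 g U) (hfg : Set.EqOn φ g S)
    {x : Euc (n+1)} (hx : x ∈ S) :
    dnWithin S φ x = fderiv ℝ g x (EuclideanSpace.single (Fin.last n) (1:ℝ)) := by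
  unfold dnWithin
  rw [fderivWithin_eq_of_convex hconv hint hSU hU hg hfg hx]

end Aux
section Aux2
variable {n : ℕ}

lemma isLinear_lastCoord :
    IsLinearMap ℝ (fun x : Euc (n+1) => x (Fin.last n)) :=
  ⟨fun _ _ => rfl, fun _ _ => rfl⟩

lemma convex_ballm (c : Euc (n+1)) (ρ : ℝ) :
    Convex ℝ (ball c ρ ∩ {x : Euc (n+1) | x (Fin.last n) ≤ 0}) :=
  (convex_ball c ρ).inter (convex_halfSpace_le isLinear_lastCoord 0)

lemma convex_ballp (c : Euc (n+1)) (ρ : ℝ) :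
    Convex ℝ (ball c ρ ∩ {x : Euc (n+1) | 0 ≤ x (Fin.last n)}) :=
  (convex_ball c ρ).inter (convex_halfSpace_ge isLinear_lastCoord 0)

lemma continuous_lastCoord : Continuous (fun x : Euc (n+1) => x (Fin.last n)) :=
  (EuclideanSpace.proj (Fin.last n)).continuous

lemma interior_nonempty_ballm {c : Euc (n+1)} {ρ : ℝ} (hρ : 0 < ρ)
    (hc : c (Fin.last n) ≤ 0) :
    (interior (ball c ρ ∩ {x : Euc (n+1) | x (Fin.last n) ≤ 0})).Nonempty := by
  set e : Euc (n+1) := EuclideanSpace.single (Fin.last n) (1:ℝ) with he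
  set p : Euc (n+1) := c - (ρ/2) • e with hp
  have hpc : dist p c = ρ/2 := by
    rw [dist_eq_norm]
    have : p - c = -((ρ/2) • e) := by rw [hp]; abel
    rw [this, norm_neg, norm_smul, he, EuclideanSpace.norm_single]
    simp [abs_of_pos hρ, abs_of_pos (half_pos hρ)]
  have hplast : p (Fin.last n) = c (Fin.last n) - ρ/2 := by
    have h1 : p (Fin.last n) = c (Fin.last n) - (ρ/2) * e (Fin.last n) := rfl
    rw [h1, he, EuclideanSpace.single_apply, if_pos rfl, mul_one]
  have hopen : IsOpen (ball c ρ ∩ {x : Euc (n+1) | x (Fin.last n) < 0}) :=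
    isOpen_ball.inter (isOpen_lt continuous_lastCoord continuous_const)
  have hsub : ball c ρ ∩ {x : Euc (n+1) | x (Fin.last n) < 0}
      ⊆ ball c ρ ∩ {x : Euc (n+1) | x (Fin.last n) ≤ 0} :=
    fun x hx => ⟨hx.1, show x (Fin.last n) ≤ 0 from le_of_lt hx.2⟩
  have hpmem : p ∈ ball c ρ ∩ {x : Euc (n+1) | x (Fin.last n) < 0} := by
    refine ⟨by rw [mem_ball, hpc]; linarith, ?_⟩
    show p (Fin.last n) < 0
    rw [hplast]; linarith
  exact ⟨p, interior_maximal hsub hopen hpmem⟩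

lemma interior_nonempty_ballp {c : Euc (n+1)} {ρ : ℝ} (hρ : 0 < ρ)
    (hc : 0 ≤ c (Fin.last n)) :
    (interior (ball c ρ ∩ {x : Euc (n+1) | 0 ≤ x (Fin.last n)})).Nonempty := by
  set e : Euc (n+1) := EuclideanSpace.single (Fin.last n) (1:ℝ) with he
  set p : Euc (n+1) := c + (ρ/2) • e with hp
  have hpc : dist p c = ρ/2 := by
    rw [dist_eq_norm]
    have : p - c = (ρ/2) • e := by rw [hp]; abel
    rw [this, norm_smul, he, EuclideanSpace.norm_single]
    rw [Real.norm_eq_abs, abs_of_pos (half_pos hρ)]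
    simp
  have hplast : p (Fin.last n) = c (Fin.last n) + ρ/2 := by
    have h1 : p (Fin.last n) = c (Fin.last n) + (ρ/2) * e (Fin.last n) := rfl
    rw [h1, he, EuclideanSpace.single_apply, if_pos rfl, mul_one]
  have hopen : IsOpen (ball c ρ ∩ {x : Euc (n+1) | 0 < x (Fin.last n)}) :=
    isOpen_ball.inter (isOpen_lt continuous_const continuous_lastCoord)
  have hsub : ball c ρ ∩ {x : Euc (n+1) | 0 < x (Fin.last n)}
      ⊆ ball c ρ ∩ {x : Euc (n+1) | 0 ≤ x (Fin.last n)} :=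
    fun x hx => ⟨hx.1, show (0:ℝ) ≤ x (Fin.last n) from le_of_lt hx.2⟩
  have hpmem : p ∈ ball c ρ ∩ {x : Euc (n+1) | 0 < x (Fin.last n)} := by
    refine ⟨by rw [mem_ball, hpc]; linarith, ?_⟩
    show 0 < p (Fin.last n)
    rw [hplast]; linarith
  exact ⟨p, interior_maximal hsub hopen hpmem⟩

end Aux2

section Aux3
variable {m : ℕ}

lemma fderiv_comb {U : Set (Euc m)} (hU : IsOpen U) {φ : Euc m → ℝ}
    (hφ : ContDiffOn ℝ 2 φ U) {q : Euc m → ℝ} (hq : ContDiff ℝ 2 q)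
    (a b c : ℝ) (L : Euc m →L[ℝ] ℝ) {y : Euc m} (hy : y ∈ U) :
    fderiv ℝ (fun x => φ x + a * q x + b * L x + c) y
      = fderiv ℝ φ y + a • fderiv ℝ q y + b • L := by
  have h1 : HasFDerivAt φ (fderiv ℝ φ y) y :=
    ((hφ.differentiableOn (by norm_num)).differentiableAt (hU.mem_nhds hy)).hasFDerivAt
  have h2 : HasFDerivAt q (fderiv ℝ q y) y :=
    ((hq.differentiable (by norm_num)) y).hasFDerivAt
  have h3 : HasFDerivAt (fun x : Euc m => L x) (L : Euc m →L[ℝ] ℝ) y := L.hasFDerivAt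
  have := (((h1.add (h2.const_mul a)).add (h3.const_mul b)).add_const c).fderiv
  exact this
lemma fderiv_fderiv_comb {U : Set (Euc m)} (hU : IsOpen U) {φ : Euc m → ℝ}
    (hφ : ContDiffOn ℝ 2 φ U) {q : Euc m → ℝ} (hq : ContDiff ℝ 2 q)
    (a b c : ℝ) (L : Euc m →L[ℝ] ℝ) {y : Euc m} (hy : y ∈ U) :
    fderiv ℝ (fderiv ℝ (fun x => φ x + a * q x + b * L x + c)) y
      = fderiv ℝ (fderiv ℝ φ) y + a • fderiv ℝ (fderiv ℝ q) y := by
  have hev : fderiv ℝ (fun x => φ x + a * q x + b * L x + c) =ᶠ[𝓝 y]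
      (fun z => fderiv ℝ φ z + a • fderiv ℝ q z + b • L) :=
    Filter.eventually_of_mem (hU.mem_nhds hy)
      (fun z hz => fderiv_comb hU hφ hq a b c L hz)
  rw [hev.fderiv_eq]
  have hdφ : DifferentiableAt ℝ (fderiv ℝ φ) y :=
    ((hφ.fderiv_of_isOpen (m := 1) hU (by norm_num)).differentiableOn (by norm_num)).differentiableAt
      (hU.mem_nhds hy)
  have hdq : DifferentiableAt ℝ (fderiv ℝ q) y :=
    ((hq.fderiv_right (m := 1) (by norm_num)).differentiable (by norm_num)) y
  have hsum : HasFDerivAt (fun z => fderiv ℝ φ z + a • fderiv ℝ q z + b • L)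
      (fderiv ℝ (fderiv ℝ φ) y + a • fderiv ℝ (fderiv ℝ q) y) y :=
    (hdφ.hasFDerivAt.add (hdq.hasFDerivAt.const_smul a)).add_const (b • L)
  exact hsum.fderiv

end Aux3
set_option maxHeartbeats 2000000 in
theorem statement_3 {n : ℕ} (lam Lam : ℝ) (hlam : 0 < lam) (hLam : lam ≤ Lam)
    (Hm Hp : Matrix (Fin (n + 1)) (Fin (n + 1)) ℝ → Euc (n + 1) → ℝ → Euc (n + 1) → ℝ)
    (hHmDE : DegElliptic2 (flatOmegaM n ∪ flatGamma n) Hm)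
    (hHmC : ContinuousOp2 (flatOmegaM n ∪ flatGamma n) Hm)
    (hHpDE : DegElliptic2 (flatOmegaP n ∪ flatGamma n) Hp)
    (hHpC : ContinuousOp2 (flatOmegaP n ∪ flatGamma n) Hp)
    (hHpUE : UnifElliptic2 lam Lam (flatOmegaP n ∪ flatGamma n) Hp)
    (u : Euc (n + 1) → ℝ) (hu : ContinuousOn u (ball 0 1))
    (hprop : ∀ x₀ ∈ ball (0 : Euc (n + 1)) 1, ∀ r : ℝ, 0 < r → ball x₀ r ⊆ ball 0 1 →
      ∀ φ : Euc (n + 1) → ℝ, ContinuousOn φ (ball x₀ r) →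
        ContDiffOn ℝ 2 φ (ball x₀ r ∩ {x | x (Fin.last n) ≤ 0}) →
        ContDiffOn ℝ 2 φ (ball x₀ r ∩ {x | 0 ≤ x (Fin.last n)}) →
        (∀ x ∈ ball x₀ r, u x ≤ φ x) → u x₀ = φ x₀ →
        (x₀ ∈ flatOmegaM n →
          Hm (hessWithinE (ball x₀ r ∩ {x | x (Fin.last n) ≤ 0}) φ x₀)
            (gradWithinE (ball x₀ r ∩ {x | x (Fin.last n) ≤ 0}) φ x₀) (φ x₀) x₀ ≤ 0) ∧
        (x₀ ∈ flatOmegaP n →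
          Hp (hessWithinE (ball x₀ r ∩ {x | 0 ≤ x (Fin.last n)}) φ x₀)
            (gradWithinE (ball x₀ r ∩ {x | 0 ≤ x (Fin.last n)}) φ x₀) (φ x₀) x₀ ≤ 0) ∧
        (x₀ ∈ flatGamma n →
          min (Hm (hessWithinE (ball x₀ r ∩ {x | 0 ≤ x (Fin.last n)}) φ x₀)
                (gradWithinE (ball x₀ r ∩ {x | 0 ≤ x (Fin.last n)}) φ x₀) (φ x₀) x₀)
              (dnWithin (ball x₀ r ∩ {x | x (Fin.last n) ≤ 0}) φ x₀ -
                dnWithin (ball x₀ r ∩ {x | 0 ≤ x (Fin.last n)}) φ x₀) ≤ 0)) :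
    StrongSub2 (ball 0 1) (flatOmegaM n) (flatOmegaP n) (flatGamma n) Hm Hp u := by
  intro x₀ φ r hsub
  obtain ⟨hr, hball, hφ, hle, heq⟩ := hsub
  have hx0r : x₀ ∈ ball x₀ r := mem_ball_self hr
  have hx01 : x₀ ∈ ball (0 : Euc (n+1)) 1 := hball hx0r
  have hpropx := hprop x₀ hx01 r hr hball φ hφ.continuousOn
    (hφ.mono inter_subset_left) (hφ.mono inter_subset_left) hle heq
  constructor
  · rintro (hm | hΓ)
    · have hlast : x₀ (Fin.last n) < 0 := hm.2
      have h := hpropx.1 hm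
      have hx0S : x₀ ∈ ball x₀ r ∩ {x | x (Fin.last n) ≤ 0} := ⟨hx0r, le_of_lt hlast⟩
      rw [hessWithinE_eq (convex_ballm x₀ r) (interior_nonempty_ballm hr (le_of_lt hlast))
            inter_subset_left isOpen_ball hφ (Set.eqOn_refl φ _) hx0S,
          gradWithinE_eq (convex_ballm x₀ r) (interior_nonempty_ballm hr (le_of_lt hlast))
            inter_subset_left isOpen_ball hφ (Set.eqOn_refl φ _) hx0S] at h
      show Hm (hessianMatrix φ x₀) (gradient φ x₀) (φ x₀) x₀ ≤ 0
      rw [hessianMatrix_eq_hessE, gradient_eq_gradE]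
      exact h
    · -- x₀ ∈ flatGamma n
      have hx0n : x₀ (Fin.last n) = 0 := hΓ.2
      set ρ : ℝ := r/2 with hρdef
      have hρpos : 0 < ρ := by positivity
      have hρr : ρ < r := by rw [hρdef]; linarith
      have hKr : closedBall x₀ ρ ⊆ ball x₀ r := closedBall_subset_ball hρr
      have hK1 : closedBall x₀ ρ ⊆ ball 0 1 := hKr.trans hball
      set qf : Euc (n+1) → ℝ := fun x => (inner ℝ (x - x₀) (x - x₀) : ℝ) with hqdef
      have hqf : ContDiff ℝ 2 qf :=
        ContDiff.inner ℝ (contDiff_id.sub contDiff_const) (contDiff_id.sub contDiff_const)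
      have hqval : ∀ x, qf x = ‖x - x₀‖^2 := fun x => real_inner_self_eq_norm_sq _
      have hq0 : qf x₀ = 0 := by rw [hqval]; simp
      have hqnn : ∀ x, 0 ≤ qf x := fun x => by rw [hqval]; positivity
      set κ : ℕ → ℝ := fun k => 1 / ((k:ℝ)+1) with hκdef
      have hκpos : ∀ k, 0 < κ k := fun k => by rw [hκdef]; positivity
      have hκ0 : Tendsto κ atTop (𝓝 0) := tendsto_one_div_add_atTop_nhds_zero_nat
      set f : ℕ → Euc (n+1) → ℝ :=
        fun k x => φ x + κ k * qf x + (κ k)^2 * min (x (Fin.last n)) 0 - u x with hfdef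
      set K' : Set (Euc (n+1)) := closedBall x₀ ρ ∩ {x | x (Fin.last n) ≤ 0} with hK'def
      have hK'c : IsCompact K' :=
        (isCompact_closedBall x₀ ρ).inter_right
          (isClosed_le continuous_lastCoord continuous_const)
      have hx0K' : x₀ ∈ K' := ⟨mem_closedBall_self hρpos.le, le_of_eq hx0n⟩
      have hcmin : Continuous fun x : Euc (n+1) => min (x (Fin.last n)) 0 :=
        continuous_lastCoord.min continuous_const
      have hK'r : K' ⊆ ball x₀ r := inter_subset_left.trans hKr
      have hfc : ∀ k, ContinuousOn (f k) K' := by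
        intro k
        apply ContinuousOn.sub
        · exact ((hφ.continuousOn.mono hK'r).add
            ((continuous_const.mul hqf.continuous).continuousOn)).add
            ((continuous_const.mul hcmin).continuousOn)
        · exact hu.mono (hK'r.trans hball)
      have hex : ∀ k : ℕ, ∃ x ∈ K', IsMinOn (f k) K' x :=
        fun k => hK'c.exists_isMinOn ⟨x₀, hx0K'⟩ (hfc k)
      choose xk hxkK' hxkmin using hex
      have hxkK : ∀ k, xk k ∈ closedBall x₀ ρ := fun k => (hxkK' k).1
      have hxkn : ∀ k, xk k (Fin.last n) ≤ 0 := fun k => (hxkK' k).2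
      have hxkr : ∀ k, xk k ∈ ball x₀ r := fun k => hKr (hxkK k)
      have hxk1 : ∀ k, xk k ∈ ball (0 : Euc (n+1)) 1 := fun k => hball (hxkr k)
      have hfx0 : ∀ k, f k x₀ = 0 := by
        intro k
        show φ x₀ + κ k * qf x₀ + (κ k)^2 * min (x₀ (Fin.last n)) 0 - u x₀ = 0
        rw [hq0, hx0n, heq]; simp
      have hm0 : ∀ k, f k (xk k) ≤ 0 := fun k =>
        (hfx0 k) ▸ (isMinOn_iff.mp (hxkmin k) x₀ hx0K')
      have hminK : ∀ k, ∀ y ∈ closedBall x₀ ρ, f k (xk k) ≤ f k y := by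
        intro k y hy
        rcases le_or_gt (y (Fin.last n)) 0 with h | h
        · exact isMinOn_iff.mp (hxkmin k) y ⟨hy, h⟩
        · have h1 : 0 ≤ f k y := by
            have hmin0 : min (y (Fin.last n)) 0 = 0 := min_eq_right h.le
            show 0 ≤ φ y + κ k * qf y + (κ k)^2 * min (y (Fin.last n)) 0 - u y
            rw [hmin0, mul_zero, add_zero]
            have huy : u y ≤ φ y := hle y (hKr hy)
            nlinarith [hqnn y, (hκpos k).le]
          linarith [hm0 k]
      have hdist : ∀ k, ‖xk k - x₀‖ ≤ κ k := by
        intro k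
        have h1 := hm0 k
        have h2 : u (xk k) ≤ φ (xk k) := hle _ (hxkr k)
        have h4 : -(min (xk k (Fin.last n)) 0) ≤ ‖xk k - x₀‖ := by
          rw [min_eq_left (hxkn k)]
          have h5 := coord_abs_le_norm (xk k - x₀) (Fin.last n)
          have h6 : (xk k - x₀) (Fin.last n) = xk k (Fin.last n) - x₀ (Fin.last n) := rfl
          rw [h6, hx0n, sub_zero] at h5
          have := neg_abs_le (xk k (Fin.last n))
          linarith
        have h3 : κ k * qf (xk k) ≤ (κ k)^2 * (-(min (xk k (Fin.last n)) 0)) := by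
          have h1' : φ (xk k) + κ k * qf (xk k)
              + (κ k)^2 * min (xk k (Fin.last n)) 0 - u (xk k) ≤ 0 := h1
          nlinarith
        have hz := hqval (xk k)
        rw [hz] at h3
        have hnn := norm_nonneg (xk k - x₀)
        have hmain : κ k * (‖xk k - x₀‖^2) ≤ (κ k)^2 * ‖xk k - x₀‖ := by
          have hint := mul_le_mul_of_nonneg_left h4 (sq_nonneg (κ k))
          linarith
        rcases eq_or_lt_of_le hnn with h0 | h0
        · rw [← h0]; exact (hκpos k).le
        · nlinarith [mul_pos (hκpos k) h0]
      have htend : Tendsto xk atTop (𝓝 x₀) := by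
        rw [tendsto_iff_dist_tendsto_zero]
        refine squeeze_zero (fun k => dist_nonneg) (fun k => ?_) hκ0
        rw [dist_eq_norm]; exact hdist k
      -- data sequences
      set L : Euc (n+1) →L[ℝ] ℝ := EuclideanSpace.proj (Fin.last n) with hLdef
      set tk : ℕ → ℝ := fun k => if xk k (Fin.last n) < 0 then (κ k)^2 else 0 with htkdef
      set A : ℕ → Matrix (Fin (n+1)) (Fin (n+1)) ℝ :=
        fun k => hessE φ (xk k) + κ k • hessE qf (xk k) with hAdef
      set b : ℕ → Euc (n+1) := fun k =>
        (EuclideanSpace.equiv (Fin (n+1)) ℝ).symm fun i =>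
          fderiv ℝ φ (xk k) (EuclideanSpace.single i (1:ℝ))
            + κ k * fderiv ℝ qf (xk k) (EuclideanSpace.single i (1:ℝ))
            + tk k * (EuclideanSpace.single i (1:ℝ) (Fin.last n)) with hbdef
      -- the key inequality
      have hkey : ∀ k : ℕ, dist (xk k) x₀ < ρ →
          Hm (A k) (b k) (u (xk k)) (xk k) ≤ 0 := by
        intro k hk
        set m : ℝ := f k (xk k) with hmdef
        set r' : ℝ := ρ - dist (xk k) x₀ with hr'def
        have hr' : 0 < r' := by rw [hr'def]; linarith
        have hball' : ball (xk k) r' ⊆ ball x₀ ρ :=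
          ball_subset_ball' (le_of_eq (by rw [hr'def]; ring))
        have hballK : ball (xk k) r' ⊆ closedBall x₀ ρ :=
          hball'.trans ball_subset_closedBall
        have hballr : ball (xk k) r' ⊆ ball x₀ r := hball'.trans (ball_subset_ball hρr.le)
        have hball1 : ball (xk k) r' ⊆ ball (0 : Euc (n+1)) 1 := hballr.trans hball
        set φ' : Euc (n+1) → ℝ :=
          fun x => φ x + κ k * qf x + (κ k)^2 * min (x (Fin.last n)) 0 - m with hφ'def
        set gm : Euc (n+1) → ℝ :=
          fun x => φ x + κ k * qf x + (κ k)^2 * L x + (-m) with hgmdef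
        set gp : Euc (n+1) → ℝ :=
          fun x => φ x + κ k * qf x + 0 * L x + (-m) with hgpdef
        have hgmC : ContDiffOn ℝ 2 gm (ball x₀ r) :=
          ((hφ.add ((contDiff_const.mul hqf).contDiffOn)).add
            ((contDiff_const.mul L.contDiff).contDiffOn)).add contDiffOn_const
        have hgpC : ContDiffOn ℝ 2 gp (ball x₀ r) :=
          ((hφ.add ((contDiff_const.mul hqf).contDiffOn)).add
            ((contDiff_const.mul L.contDiff).contDiffOn)).add contDiffOn_const
        have hLx : ∀ x : Euc (n+1), L x = x (Fin.last n) := fun x => rfl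
        have hEqm : Set.EqOn φ' gm (ball (xk k) r' ∩ {x | x (Fin.last n) ≤ 0}) := by
          intro x hx
          show φ x + κ k * qf x + (κ k)^2 * min (x (Fin.last n)) 0 - m
            = φ x + κ k * qf x + (κ k)^2 * L x + (-m)
          rw [min_eq_left (show x (Fin.last n) ≤ 0 from hx.2), hLx]; ring
        have hEqp : Set.EqOn φ' gp (ball (xk k) r' ∩ {x | 0 ≤ x (Fin.last n)}) := by
          intro x hx
          show φ x + κ k * qf x + (κ k)^2 * min (x (Fin.last n)) 0 - m
            = φ x + κ k * qf x + 0 * L x + (-m)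
          rw [min_eq_right (show (0:ℝ) ≤ x (Fin.last n) from hx.2), hLx]; ring
        have hsubm : ball (xk k) r' ∩ {x | x (Fin.last n) ≤ 0} ⊆ ball x₀ r :=
          inter_subset_left.trans hballr
        have hsubp : ball (xk k) r' ∩ {x | 0 ≤ x (Fin.last n)} ⊆ ball x₀ r :=
          inter_subset_left.trans hballr
        have hcontφ' : ContinuousOn φ' (ball (xk k) r') :=
          (((hφ.continuousOn.mono hballr).add
            ((continuous_const.mul hqf.continuous).continuousOn)).add
            ((continuous_const.mul hcmin).continuousOn)).sub continuousOn_const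
        have hC2m : ContDiffOn ℝ 2 φ' (ball (xk k) r' ∩ {x | x (Fin.last n) ≤ 0}) :=
          (hgmC.mono hsubm).congr hEqm
        have hC2p : ContDiffOn ℝ 2 φ' (ball (xk k) r' ∩ {x | 0 ≤ x (Fin.last n)}) :=
          (hgpC.mono hsubp).congr hEqp
        have hum : ∀ x ∈ ball (xk k) r', u x ≤ φ' x := by
          intro x hx
          have := hminK k x (hballK hx)
          show u x ≤ φ x + κ k * qf x + (κ k)^2 * min (x (Fin.last n)) 0 - m
          have hfx : f k x = φ x + κ k * qf x + (κ k)^2 * min (x (Fin.last n)) 0 - u x := rfl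
          rw [← hmdef] at this
          rw [hfx] at this
          linarith
        have huxk : u (xk k) = φ' (xk k) := by
          show u (xk k) = φ (xk k) + κ k * qf (xk k)
            + (κ k)^2 * min (xk k (Fin.last n)) 0 - m
          rw [hmdef]
          show u (xk k) = φ (xk k) + κ k * qf (xk k) + (κ k)^2 * min (xk k (Fin.last n)) 0
            - (φ (xk k) + κ k * qf (xk k) + (κ k)^2 * min (xk k (Fin.last n)) 0 - u (xk k))
          ring
        obtain ⟨HC1, HC2, HC3⟩ := hprop (xk k) (hxk1 k) r' hr' hball1 φ' hcontφ'
          hC2m hC2p hum huxk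
        have hxkSm : xk k ∈ ball (xk k) r' ∩ {x | x (Fin.last n) ≤ 0} :=
          ⟨mem_ball_self hr', hxkn k⟩
        have hconvm := convex_ballm (xk k) r'
        have hintm := interior_nonempty_ballm hr' (hxkn k)
        have hAeq : hessE gm (xk k) = A k := by
          ext i j
          show fderiv ℝ (fderiv ℝ gm) (xk k) (EuclideanSpace.single i (1:ℝ))
            (EuclideanSpace.single j (1:ℝ)) = _
          rw [hgmdef, fderiv_fderiv_comb isOpen_ball hφ hqf (κ k) ((κ k)^2) (-m) L (hxkr k)]
          show (fderiv ℝ (fderiv ℝ φ) (xk k)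
              + κ k • fderiv ℝ (fderiv ℝ qf) (xk k)) (EuclideanSpace.single i (1:ℝ))
              (EuclideanSpace.single j (1:ℝ))
            = (hessE φ (xk k) + κ k • hessE qf (xk k)) i j
          simp [hessE, Matrix.add_apply, Matrix.smul_apply, smul_eq_mul]
        rcases lt_or_eq_of_le (hxkn k) with hlt | heq0
        · -- interior minus point
          have hxkm : xk k ∈ flatOmegaM n := ⟨hxk1 k, hlt⟩
          have h := HC1 hxkm
          rw [hessWithinE_eq hconvm hintm hsubm isOpen_ball hgmC hEqm hxkSm,
              gradWithinE_eq hconvm hintm hsubm isOpen_ball hgmC hEqm hxkSm,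
              ← huxk] at h
          rw [hAeq] at h
          have hbeq : gradE gm (xk k) = b k := by
            rw [hbdef]
            show (EuclideanSpace.equiv (Fin (n+1)) ℝ).symm
              (fun i => fderiv ℝ gm (xk k) (EuclideanSpace.single i (1:ℝ))) = _
            congr 1
            funext i
            rw [hgmdef, fderiv_comb isOpen_ball hφ hqf (κ k) ((κ k)^2) (-m) L (hxkr k)]
            have htk : tk k = (κ k)^2 := if_pos hlt
            rw [htk]
            show fderiv ℝ φ (xk k) (EuclideanSpace.single i (1:ℝ))
                + κ k * fderiv ℝ qf (xk k) (EuclideanSpace.single i (1:ℝ))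
                + (κ k)^2 * L (EuclideanSpace.single i (1:ℝ)) = _
            rw [hLx]
          rw [hbeq] at h
          exact h
        · -- interface point
          have hxkΓ : xk k ∈ flatGamma n := ⟨hxk1 k, heq0⟩
          have h := HC3 hxkΓ
          have hxkSp : xk k ∈ ball (xk k) r' ∩ {x | 0 ≤ x (Fin.last n)} :=
            ⟨mem_ball_self hr', le_of_eq heq0.symm⟩
          have hconvp := convex_ballp (xk k) r'
          have hintp := interior_nonempty_ballp hr' (le_of_eq heq0.symm)
          have hdnm : dnWithin (ball (xk k) r' ∩ {x | x (Fin.last n) ≤ 0}) φ' (xk k)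
              = fderiv ℝ gm (xk k) (EuclideanSpace.single (Fin.last n) (1:ℝ)) :=
            dnWithin_eq hconvm hintm hsubm isOpen_ball hgmC hEqm hxkSm
          have hdnp : dnWithin (ball (xk k) r' ∩ {x | 0 ≤ x (Fin.last n)}) φ' (xk k)
              = fderiv ℝ gp (xk k) (EuclideanSpace.single (Fin.last n) (1:ℝ)) :=
            dnWithin_eq hconvp hintp hsubp isOpen_ball hgpC hEqp hxkSp
          have hLe : L (EuclideanSpace.single (Fin.last n) (1:ℝ)) = 1 := by
            rw [hLx, EuclideanSpace.single_apply, if_pos rfl]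
          have hjump : dnWithin (ball (xk k) r' ∩ {x | x (Fin.last n) ≤ 0}) φ' (xk k)
              - dnWithin (ball (xk k) r' ∩ {x | 0 ≤ x (Fin.last n)}) φ' (xk k)
              = (κ k)^2 := by
            rw [hdnm, hdnp, hgmdef, hgpdef,
              fderiv_comb isOpen_ball hφ hqf (κ k) ((κ k)^2) (-m) L (hxkr k),
              fderiv_comb isOpen_ball hφ hqf (κ k) 0 (-m) L (hxkr k)]
            simp [hLe]
          have hHmle : Hm (hessWithinE (ball (xk k) r' ∩ {x | 0 ≤ x (Fin.last n)}) φ' (xk k))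
              (gradWithinE (ball (xk k) r' ∩ {x | 0 ≤ x (Fin.last n)}) φ' (xk k))
              (φ' (xk k)) (xk k) ≤ 0 := by
            by_contra hpos
            push_neg at hpos
            have h2 : 0 < (κ k)^2 := by positivity
            rw [hjump] at h
            have := lt_min hpos h2
            linarith
          have hAeqp : hessE gp (xk k) = A k := by
            ext i j
            show fderiv ℝ (fderiv ℝ gp) (xk k) (EuclideanSpace.single i (1:ℝ))
              (EuclideanSpace.single j (1:ℝ)) = _
            rw [hgpdef, fderiv_fderiv_comb isOpen_ball hφ hqf (κ k) 0 (-m) L (hxkr k)]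
            show (fderiv ℝ (fderiv ℝ φ) (xk k)
                + κ k • fderiv ℝ (fderiv ℝ qf) (xk k)) (EuclideanSpace.single i (1:ℝ))
                (EuclideanSpace.single j (1:ℝ))
              = (hessE φ (xk k) + κ k • hessE qf (xk k)) i j
            simp [hessE, Matrix.add_apply, Matrix.smul_apply, smul_eq_mul]
          have hbeqp : gradE gp (xk k) = b k := by
            rw [hbdef]
            show (EuclideanSpace.equiv (Fin (n+1)) ℝ).symm
              (fun i => fderiv ℝ gp (xk k) (EuclideanSpace.single i (1:ℝ))) = _
            congr 1
            funext i
            rw [hgpdef, fderiv_comb isOpen_ball hφ hqf (κ k) 0 (-m) L (hxkr k)]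
            have htk : tk k = 0 := if_neg (by rw [heq0]; exact lt_irrefl 0)
            rw [htk]
            show fderiv ℝ φ (xk k) (EuclideanSpace.single i (1:ℝ))
                + κ k * fderiv ℝ qf (xk k) (EuclideanSpace.single i (1:ℝ))
                + 0 * L (EuclideanSpace.single i (1:ℝ)) = _
            rw [hLx]
          rw [hessWithinE_eq hconvp hintp hsubp isOpen_ball hgpC hEqp hxkSp,
              gradWithinE_eq hconvp hintp hsubp isOpen_ball hgpC hEqp hxkSp,
              ← huxk, hAeqp, hbeqp] at hHmle
          exact hHmle
      -- eventual inequality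
      have hkey_ev : ∀ᶠ k in atTop, Hm (A k) (b k) (u (xk k)) (xk k) ≤ 0 := by
        have hIio : Iio ρ ∈ 𝓝 (0:ℝ) := Iio_mem_nhds hρpos
        have hev1 : ∀ᶠ k in atTop, κ k ∈ Iio ρ := hκ0 hIio
        filter_upwards [hev1] with k hk
        refine hkey k ?_
        rw [dist_eq_norm]
        exact lt_of_le_of_lt (hdist k) hk
      -- convergence of data
      have hcont1 : ContinuousOn (fderiv ℝ φ) (ball x₀ r) :=
        hφ.continuousOn_fderiv_of_isOpen isOpen_ball one_le_two
      have hcont2 : ContinuousOn (fderiv ℝ (fderiv ℝ φ)) (ball x₀ r) :=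
        (hφ.fderiv_of_isOpen isOpen_ball (by norm_num)).continuousOn_fderiv_of_isOpen
          isOpen_ball le_rfl
      have hT1 : Tendsto (fun k => fderiv ℝ φ (xk k)) atTop (𝓝 (fderiv ℝ φ x₀)) :=
        ((hcont1.continuousAt (isOpen_ball.mem_nhds hx0r)).tendsto).comp htend
      have hT2 : Tendsto (fun k => fderiv ℝ (fderiv ℝ φ) (xk k)) atTop
          (𝓝 (fderiv ℝ (fderiv ℝ φ) x₀)) :=
        ((hcont2.continuousAt (isOpen_ball.mem_nhds hx0r)).tendsto).comp htend
      have hTq1 : Tendsto (fun k => fderiv ℝ qf (xk k)) atTop (𝓝 (fderiv ℝ qf x₀)) :=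
        ((hqf.continuous_fderiv (by norm_num)).tendsto x₀).comp htend
      have hTq2 : Tendsto (fun k => fderiv ℝ (fderiv ℝ qf) (xk k)) atTop
          (𝓝 (fderiv ℝ (fderiv ℝ qf) x₀)) :=
        (((hqf.fderiv_right (m := 1) (by norm_num)).continuous_fderiv (by norm_num)).tendsto x₀).comp
          htend
      have hκsq : Tendsto (fun k => (κ k)^2) atTop (𝓝 0) := by
        have := hκ0.mul hκ0
        simpa [pow_two] using this
      have htk0 : Tendsto tk atTop (𝓝 0) := by
        refine squeeze_zero (fun k => ?_) (fun k => ?_) hκsq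
        · rw [htkdef]
          by_cases h : xk k (Fin.last n) < 0 <;> simp [h] <;> positivity
        · rw [htkdef]
          by_cases h : xk k (Fin.last n) < 0 <;> simp [h] <;> positivity
      have huT : Tendsto (fun k => u (xk k)) atTop (𝓝 (φ x₀)) := by
        rw [← heq]
        exact ((hu.continuousAt (isOpen_ball.mem_nhds hx01)).tendsto).comp htend
      have hAT : Tendsto A atTop (𝓝 (hessE φ x₀)) := by
        refine tendsto_pi_nhds.mpr ?_
        intro i
        rw [tendsto_pi_nhds]
        intro j
        have he1 : Continuous fun (G : Euc (n+1) →L[ℝ] (Euc (n+1) →L[ℝ] ℝ)) =>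
            G (EuclideanSpace.single i (1:ℝ)) (EuclideanSpace.single j (1:ℝ)) :=
          ((ContinuousLinearMap.apply ℝ ℝ (EuclideanSpace.single j (1:ℝ))).continuous).comp
            ((ContinuousLinearMap.apply ℝ (Euc (n+1) →L[ℝ] ℝ)
              (EuclideanSpace.single i (1:ℝ))).continuous)
        have hTφij := (he1.tendsto _).comp hT2
        have hTqij := (he1.tendsto _).comp hTq2
        have hsum := hTφij.add (hκ0.mul hTqij)
        have hAentry : ∀ k, A k i j
            = fderiv ℝ (fderiv ℝ φ) (xk k) (EuclideanSpace.single i (1:ℝ))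
                (EuclideanSpace.single j (1:ℝ))
              + κ k * fderiv ℝ (fderiv ℝ qf) (xk k) (EuclideanSpace.single i (1:ℝ))
                (EuclideanSpace.single j (1:ℝ)) := by
          intro k
          rw [hAdef]
          simp [hessE, Matrix.add_apply, Matrix.smul_apply, smul_eq_mul]
        have : hessE φ x₀ i j
            = fderiv ℝ (fderiv ℝ φ) x₀ (EuclideanSpace.single i (1:ℝ))
                (EuclideanSpace.single j (1:ℝ))
              + 0 * fderiv ℝ (fderiv ℝ qf) x₀ (EuclideanSpace.single i (1:ℝ))
                (EuclideanSpace.single j (1:ℝ)) := by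
          simp [hessE]
        rw [this]
        simp only [hAentry]
        exact hsum
      have hbT : Tendsto b atTop (𝓝 (gradE φ x₀)) := by
        have hW : Tendsto (fun k => fun i =>
            fderiv ℝ φ (xk k) (EuclideanSpace.single i (1:ℝ))
              + κ k * fderiv ℝ qf (xk k) (EuclideanSpace.single i (1:ℝ))
              + tk k * (EuclideanSpace.single i (1:ℝ) (Fin.last n))) atTop
            (𝓝 (fun i => fderiv ℝ φ x₀ (EuclideanSpace.single i (1:ℝ)))) := by
          rw [tendsto_pi_nhds]
          intro i
          have he2 : Continuous fun (G : Euc (n+1) →L[ℝ] ℝ) =>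
              G (EuclideanSpace.single i (1:ℝ)) :=
            (ContinuousLinearMap.apply ℝ ℝ (EuclideanSpace.single i (1:ℝ))).continuous
          have h1 := (he2.tendsto _).comp hT1
          have h2 := (he2.tendsto _).comp hTq1
          have hc : Tendsto (fun _ : ℕ => (EuclideanSpace.single i (1:ℝ) (Fin.last n) : ℝ))
              atTop (𝓝 (EuclideanSpace.single i (1:ℝ) (Fin.last n))) := tendsto_const_nhds
          have hsum := (h1.add (hκ0.mul h2)).add (htk0.mul hc)
          simpa using hsum
        have hsymm := ((EuclideanSpace.equiv (Fin (n+1)) ℝ).symm.continuous.tendsto _).comp hW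
        rw [hbdef]
        convert hsymm using 2
        all_goals rfl
      have hSk : ∀ k, xk k ∈ flatOmegaM n ∪ flatGamma n := by
        intro k
        rcases lt_or_eq_of_le (hxkn k) with h | h
        · exact Or.inl ⟨hxk1 k, h⟩
        · exact Or.inr ⟨hxk1 k, h⟩
      have hP0mem : ((hessE φ x₀, gradE φ x₀, φ x₀, x₀) :
          Matrix (Fin (n+1)) (Fin (n+1)) ℝ × Euc (n+1) × ℝ × Euc (n+1))
          ∈ (univ ×ˢ univ ×ˢ univ ×ˢ (flatOmegaM n ∪ flatGamma n)) :=
        ⟨mem_univ _, mem_univ _, mem_univ _, Or.inr hΓ⟩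
      have htuple : Tendsto (fun k => ((A k, b k, u (xk k), xk k) :
          Matrix (Fin (n+1)) (Fin (n+1)) ℝ × Euc (n+1) × ℝ × Euc (n+1))) atTop
          (𝓝[univ ×ˢ univ ×ˢ univ ×ˢ (flatOmegaM n ∪ flatGamma n)]
            (hessE φ x₀, gradE φ x₀, φ x₀, x₀)) := by
        rw [tendsto_nhdsWithin_iff]
        constructor
        · rw [nhds_prod_eq, nhds_prod_eq, nhds_prod_eq]
          exact hAT.prodMk (hbT.prodMk (huT.prodMk htend))
        · exact Eventually.of_forall fun k => ⟨mem_univ _, mem_univ _, mem_univ _, hSk k⟩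
      have hfinal : Tendsto (fun k => Hm (A k) (b k) (u (xk k)) (xk k)) atTop
          (𝓝 (Hm (hessE φ x₀) (gradE φ x₀) (φ x₀) x₀)) :=
        ((hHmC _ hP0mem).tendsto).comp htuple
      show Hm (hessianMatrix φ x₀) (gradient φ x₀) (φ x₀) x₀ ≤ 0
      rw [hessianMatrix_eq_hessE, gradient_eq_gradE]
      exact le_of_tendsto hfinal hkey_ev
  · intro hp
    have hlast : 0 < x₀ (Fin.last n) := hp.2
    have h := hpropx.2.1 hp
    have hx0S : x₀ ∈ ball x₀ r ∩ {x | 0 ≤ x (Fin.last n)} := ⟨hx0r, le_of_lt hlast⟩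
    rw [hessWithinE_eq (convex_ballp x₀ r) (interior_nonempty_ballp hr (le_of_lt hlast))
          inter_subset_left isOpen_ball hφ (Set.eqOn_refl φ _) hx0S,
        gradWithinE_eq (convex_ballp x₀ r) (interior_nonempty_ballp hr (le_of_lt hlast))
          inter_subset_left isOpen_ball hφ (Set.eqOn_refl φ _) hx0S] at h
    show Hp (hessianMatrix φ x₀) (gradient φ x₀) (φ x₀) x₀ ≤ 0
    rw [hessianMatrix_eq_hessE, gradient_eq_gradE]
    exact h
end
end

section
/- Let H ∈ C(ℝⁿ) be quasi-convex (every sub-level set {p : H(p) ≤ λ} is convex) with all sub-level sets bounded. Let Ω ⊆ ℝⁿ be open, let {u_k} ⊆ C¹(Ω) be an equicontinuous sequence of classical sub-solutions, i.e. H(Du_k(x)) ≤ 0 for every k and every x ∈ Ω, and assume u(x) := inf_k u_k(x) is finite for every x ∈ Ω. Then u ∈ C(Ω) and u is a viscosity sub-solution of H(Du) ≤ 0 in Ω. -/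
open Metric Set Filter Topology Bornology
open scoped RealInnerProductSpace

noncomputable section

lemma grad_inner {n : ℕ} (g : Euc n → ℝ) (x y : Euc n) :
    ⟪gradient g x, y⟫ = fderiv ℝ g x y := by
  rw [gradient]; exact InnerProductSpace.toDual_symm_apply

lemma hasDerivAt_comp_line {n : ℕ} {g : Euc n → ℝ} {x₀ v : Euc n} {t : ℝ}
    (hg : DifferentiableAt ℝ g (x₀ + t • v)) :
    HasDerivAt (fun s : ℝ => g (x₀ + s • v)) (fderiv ℝ g (x₀ + t • v) v) t := by
  have hline : HasDerivAt (fun s : ℝ => x₀ + s • v) v t := by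
    simpa using ((hasDerivAt_id t).smul_const v).const_add x₀
  exact hg.hasFDerivAt.comp_hasDerivAt t hline

theorem statement_15 {n : ℕ} (H : Euc n → ℝ) (hHC : Continuous H)
    (hqc : ∀ c : ℝ, Convex ℝ {p : Euc n | H p ≤ c})
    (hbdd : ∀ c : ℝ, Bornology.IsBounded {p : Euc n | H p ≤ c})
    (Ω : Set (Euc n)) (hΩ : IsOpen Ω)
    (uk : ℕ → Euc n → ℝ) (hC1 : ∀ k, ContDiffOn ℝ 1 (uk k) Ω)
    (hcl : ∀ k, ∀ x ∈ Ω, H (gradient (uk k) x) ≤ 0)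
    (hequi : EquicontinuousOn uk Ω)
    (hfin : ∀ x ∈ Ω, BddBelow (Set.range fun k => uk k x)) :
    ContinuousOn (fun x => ⨅ k, uk k x) Ω ∧
      ∀ x₀ : Euc n, ∀ φ : Euc n → ℝ, ∀ ρ : ℝ,
        SubTest Ω (fun x => ⨅ k, uk k x) x₀ φ ρ → H (gradient φ x₀) ≤ 0 := by
  have hcont : ContinuousOn (fun x => ⨅ k, uk k x) Ω := by
    intro x hx
    rw [ContinuousWithinAt, Metric.tendsto_nhds]
    intro ε hε
    filter_upwards [hequi x hx _ (dist_mem_uniformity (half_pos hε)), self_mem_nhdsWithin]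
      with y hy hyΩ
    have h1 : (⨅ k, uk k y) ≤ (⨅ k, uk k x) + ε / 2 := by
      have hk : ∀ k, (⨅ j, uk j y) - ε / 2 ≤ uk k x := by
        intro k
        have h2 : (⨅ j, uk j y) ≤ uk k y := ciInf_le (hfin y hyΩ) k
        have h3 : dist (uk k x) (uk k y) < ε / 2 := hy k
        rw [Real.dist_eq, abs_lt] at h3
        linarith [h3.1, h3.2]
      linarith [le_ciInf hk]
    have h2 : (⨅ k, uk k x) ≤ (⨅ k, uk k y) + ε / 2 := by
      have hk : ∀ k, (⨅ j, uk j x) - ε / 2 ≤ uk k y := by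
        intro k
        have h2 : (⨅ j, uk j x) ≤ uk k x := ciInf_le (hfin x hx) k
        have h3 : dist (uk k x) (uk k y) < ε / 2 := hy k
        rw [Real.dist_eq, abs_lt] at h3
        linarith [h3.1, h3.2]
      linarith [le_ciInf hk]
    rw [Real.dist_eq, abs_lt]
    constructor <;> linarith
  refine ⟨hcont, ?_⟩
  intro x₀ φ ρ hT
  obtain ⟨hρ, hball, hφC2, hle, heq⟩ := hT
  by_contra hH
  push_neg at hH
  have hx₀Ω : x₀ ∈ Ω := hball (mem_ball_self hρ)
  have hKclosed : IsClosed {p : Euc n | H p ≤ 0} := isClosed_le hHC continuous_const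
  have hp₀notin : gradient φ x₀ ∉ {p : Euc n | H p ≤ 0} := fun h => absurd h (not_le.2 hH)
  obtain ⟨f, c, hfK, hfp₀⟩ := geometric_hahn_banach_closed_point (hqc 0) hKclosed hp₀notin
  set w := (InnerProductSpace.toDual ℝ (Euc n)).symm f with hwdef
  have hfapp : ∀ p : Euc n, ⟪w, p⟫ = f p := fun p => InnerProductSpace.toDual_symm_apply
  set v : Euc n := -w with hvdef
  -- the key directional derivative computation
  have hfd : ∀ (g : Euc n → ℝ) (x : Euc n), fderiv ℝ g x v = -(f (gradient g x)) := by
    intro g x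
    rw [← grad_inner g x v, hvdef, inner_neg_right, real_inner_comm, hfapp]
  have hdiff : ∀ (k : ℕ), ∀ x ∈ Ω, DifferentiableAt ℝ (uk k) x := fun k x hx =>
    ((hC1 k).differentiableOn one_ne_zero).differentiableAt (hΩ.mem_nhds hx)
  set t₁ : ℝ := ρ / (2 * (‖w‖ + 1)) with ht₁def
  have hwpos : (0:ℝ) < ‖w‖ + 1 := by positivity
  have ht₁pos : 0 < t₁ := by positivity
  have hmem : ∀ t ∈ Icc (0:ℝ) t₁, x₀ + t • v ∈ ball x₀ ρ := by
    intro t ht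
    rw [mem_ball, dist_eq_norm]
    have : x₀ + t • v - x₀ = t • v := by abel
    rw [this, norm_smul, hvdef, norm_neg, Real.norm_eq_abs, abs_of_nonneg ht.1]
    have h1 : t * ‖w‖ ≤ t₁ * ‖w‖ := by
      apply mul_le_mul_of_nonneg_right ht.2 (norm_nonneg w)
    have h2 : t₁ * ‖w‖ < ρ := by
      rw [ht₁def, div_mul_eq_mul_div, div_lt_iff₀ (by positivity)]
      nlinarith [norm_nonneg w]
    linarith
  -- MVT lower bound for each uk
  have hMVT : ∀ (k : ℕ), ∀ t ∈ Icc (0:ℝ) t₁, uk k x₀ - c * t ≤ uk k (x₀ + t • v) := by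
    intro k t ht
    have hD : ∀ s ∈ Icc (0:ℝ) t₁,
        HasDerivAt (fun s : ℝ => uk k (x₀ + s • v)) (fderiv ℝ (uk k) (x₀ + s • v) v) s := by
      intro s hs
      exact hasDerivAt_comp_line (hdiff k _ (hball (hmem s hs)))
    have key := (convex_Icc (0:ℝ) t₁).mul_sub_le_image_sub_of_le_deriv
      (f := fun s : ℝ => uk k (x₀ + s • v)) (C := -c)
      (fun s hs => ((hD s hs).continuousAt).continuousWithinAt)
      (fun s hs => ((hD s (interior_subset hs)).differentiableAt).differentiableWithinAt)
      (fun s hs => by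
        rw [(hD s (interior_subset hs)).deriv, hfd]
        have : f (gradient (uk k) (x₀ + s • v)) < c :=
          hfK _ (hcl k _ (hball (hmem s (interior_subset hs))))
        linarith)
      0 ⟨le_refl 0, le_of_lt ht₁pos⟩ t ht ht.1
    have h0 : x₀ + (0:ℝ) • v = x₀ := by simp
    simp only [h0] at key
    linarith [key]
  -- lower bound for the infimum
  have hulow : ∀ t ∈ Icc (0:ℝ) t₁,
      (⨅ k, uk k x₀) - c * t ≤ ⨅ k, uk k (x₀ + t • v) := by
    intro t ht
    refine le_ciInf fun k => ?_
    have h1 := hMVT k t ht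
    have h2 : (⨅ j, uk j x₀) ≤ uk k x₀ := ciInf_le (hfin x₀ hx₀Ω) k
    linarith
  -- derivative of the test-function side
  have hφdiff : DifferentiableAt ℝ φ (x₀ + (0:ℝ) • v) := by
    have h0 : x₀ + (0:ℝ) • v = x₀ := by simp
    rw [h0]
    exact (hφC2.differentiableOn two_ne_zero).differentiableAt
      (isOpen_ball.mem_nhds (mem_ball_self hρ))
  have hΨ : HasDerivAt (fun t : ℝ => φ (x₀ + t • v) + c * t)
      (fderiv ℝ φ (x₀ + (0:ℝ) • v) v + c * 1) 0 :=
    (hasDerivAt_comp_line hφdiff).add ((hasDerivAt_id 0).const_mul c)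
  have hdneg : fderiv ℝ φ (x₀ + (0:ℝ) • v) v + c * 1 < 0 := by
    have h0 : x₀ + (0:ℝ) • v = x₀ := by simp
    rw [h0, hfd]
    linarith
  rw [hasDerivAt_iff_tendsto_slope] at hΨ
  have hev1 : ∀ᶠ t in 𝓝[>] (0:ℝ),
      slope (fun t : ℝ => φ (x₀ + t • v) + c * t) 0 t < 0 :=
    (hΨ.mono_left (nhdsWithin_mono 0 (fun t ht => by
      simp only [Set.mem_compl_iff, Set.mem_singleton_iff]
      exact ne_of_gt ht))).eventually (Iio_mem_nhds hdneg)
  have hev2 : ∀ᶠ t in 𝓝[>] (0:ℝ), t ∈ Ioc (0:ℝ) t₁ :=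
    Ioc_mem_nhdsGT_of_mem ⟨le_refl 0, ht₁pos⟩
  obtain ⟨t, hts, htm⟩ := (hev1.and hev2).exists
  have htpos : 0 < t := htm.1
  have htIcc : t ∈ Icc (0:ℝ) t₁ := ⟨le_of_lt htpos, htm.2⟩
  rw [slope_def_field] at hts
  have h00 : x₀ + (0:ℝ) • v = x₀ := by simp
  rw [h00] at hts
  have hΨt : φ (x₀ + t • v) + c * t < φ x₀ + c * 0 := by
    have := (div_neg_iff).1 (by simpa using hts)
    rcases this with ⟨h1, h2⟩ | ⟨h1, h2⟩
    · linarith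
    · linarith
  have hub : (⨅ k, uk k (x₀ + t • v)) ≤ φ (x₀ + t • v) := hle _ (hmem t htIcc)
  have hlow := hulow t htIcc
  have heq' : (⨅ k, uk k x₀) = φ x₀ := heq
  linarith

end
end

section
/- Let H ∈ C(ℝⁿ), ε > 0, and p' ∈ ℝ^{n−1}. Let u be Lipschitz continuous on B₁^{n−1}×(−1,0] ⊆ ℝⁿ, a viscosity sub-solution of H(Du) ≤ 0 in the open set B₁^{n−1}×(−1,0), and suppose u(x',0) ≤ u(0) + (1/(2ε))|x'|² + p'·x' for all x' ∈ B₁^{n−1}. Then there exists pₙ ∈ ℝ such that H((p',pₙ)) ≤ 0. -/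
open Metric Set Filter Topology Bornology

set_option maxHeartbeats 4000000
noncomputable section

/-- The gradient of the test functions used below. -/
def gvec {n : ℕ} (c₁ A m : ℝ) (p' : Euc n) (x : Euc (n+1)) : Euc (n+1) :=
  (WithLp.equiv 2 (Fin (n+1) → ℝ)).symm
    (Fin.snoc (fun i => 2*c₁*x i.castSucc + p' i) (A + 2*m*x (Fin.last n)))

lemma gvec_castSucc {n : ℕ} (c₁ A m : ℝ) (p' : Euc n) (x : Euc (n+1)) (i : Fin n) :
    gvec c₁ A m p' x i.castSucc = 2*c₁*x i.castSucc + p' i := by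
  simp [gvec, WithLp.equiv_symm_apply, PiLp.toLp_apply]

lemma gvec_last {n : ℕ} (c₁ A m : ℝ) (p' : Euc n) (x : Euc (n+1)) :
    gvec c₁ A m p' x (Fin.last n) = A + 2*m*x (Fin.last n) := by
  simp [gvec, WithLp.equiv_symm_apply, PiLp.toLp_apply]

lemma hasGradientAt_phi {n : ℕ} (C c₁ A m : ℝ) (p' : Euc n) (x : Euc (n+1)) :
    HasGradientAt (fun y : Euc (n+1) => C + c₁ * (∑ i : Fin n, (y i.castSucc)^2) +
      (∑ i : Fin n, p' i * y i.castSucc) + A * y (Fin.last n) + m * (y (Fin.last n))^2)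
      (gvec c₁ A m p' x) x := by
  have hproj : ∀ j : Fin (n+1), HasFDerivAt (fun y : Euc (n+1) => y j)
      (EuclideanSpace.proj j : Euc (n+1) →L[ℝ] ℝ) x := by
    intro j
    have := (EuclideanSpace.proj (𝕜 := ℝ) j : Euc (n+1) →L[ℝ] ℝ).hasFDerivAt (x := x)
    convert this using 2 with y
    rfl
  have hsq : ∀ j : Fin (n+1), HasFDerivAt (fun y : Euc (n+1) => (y j)^2)
      (((2:ℕ) * x j ^ 1) • (EuclideanSpace.proj j : Euc (n+1) →L[ℝ] ℝ)) x := by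
    intro j
    simp only [pow_two, pow_one, Nat.cast_ofNat, two_mul, add_smul]
    exact (hproj j).mul (hproj j)
  have hS : HasFDerivAt (fun y : Euc (n+1) => ∑ i : Fin n, (y i.castSucc)^2)
      (∑ i : Fin n, ((2 : ℕ) * x i.castSucc ^ 1) • (EuclideanSpace.proj i.castSucc : Euc (n+1) →L[ℝ] ℝ)) x :=
    HasFDerivAt.fun_sum (fun i _ => hsq i.castSucc)
  have hT : HasFDerivAt (fun y : Euc (n+1) => ∑ i : Fin n, p' i * y i.castSucc)
      (∑ i : Fin n, p' i • (EuclideanSpace.proj i.castSucc : Euc (n+1) →L[ℝ] ℝ)) x :=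
    HasFDerivAt.fun_sum (fun i _ => (hproj i.castSucc).const_mul (p' i))
  have hlast2 : HasFDerivAt (fun y : Euc (n+1) => m * (y (Fin.last n))^2)
      (m • (((2:ℕ) * x (Fin.last n) ^ 1) • (EuclideanSpace.proj (Fin.last n) : Euc (n+1) →L[ℝ] ℝ))) x :=
    (hsq (Fin.last n)).const_mul m
  have h := ((((hasFDerivAt_const C x).add (hS.const_mul c₁)).add hT).add
      ((hproj (Fin.last n)).const_mul A)).add hlast2
  rw [hasGradientAt_iff_hasFDerivAt]
  refine h.congr_fderiv ?_
  symm
  ext v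
  simp only [InnerProductSpace.toDual_apply_apply, PiLp.inner_apply, RCLike.inner_apply, conj_trivial,
    ContinuousLinearMap.add_apply, ContinuousLinearMap.coe_sum', Finset.sum_apply,
    ContinuousLinearMap.coe_smul', Pi.smul_apply, PiLp.proj_apply, smul_eq_mul,
    ContinuousLinearMap.zero_apply, Fin.sum_univ_castSucc, gvec_castSucc, gvec_last]
  rw [show (∑ i : Fin n, v i.castSucc * (2*c₁*x i.castSucc + p' i))
      = ∑ i : Fin n, (c₁*((2:ℕ) * x i.castSucc ^1 * v i.castSucc) + p' i * v i.castSucc)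
      from Finset.sum_congr rfl (fun i _ => by push_cast; ring), Finset.sum_add_distrib,
      Finset.mul_sum]
  push_cast
  ring

lemma contDiff_phi {n : ℕ} (C c₁ A m : ℝ) (p' : Euc n) :
    ContDiff ℝ 2 (fun y : Euc (n+1) => C + c₁ * (∑ i : Fin n, (y i.castSucc)^2) +
      (∑ i : Fin n, p' i * y i.castSucc) + A * y (Fin.last n) + m * (y (Fin.last n))^2) := by
  have hcoord : ∀ j : Fin (n+1), ContDiff ℝ 2 (fun y : Euc (n+1) => y j) := by
    intro j
    have := (EuclideanSpace.proj (𝕜 := ℝ) j : Euc (n+1) →L[ℝ] ℝ).contDiff (n := 2)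
    convert this using 2 with y
    rfl
  exact ((((contDiff_const.add (contDiff_const.mul
      (ContDiff.sum fun i _ => (hcoord i.castSucc).pow 2))).add
    (ContDiff.sum fun i _ => contDiff_const.mul (hcoord i.castSucc))).add
    (contDiff_const.mul (hcoord (Fin.last n)))).add
    (contDiff_const.mul ((hcoord (Fin.last n)).pow 2)))

theorem statement_17 {n : ℕ} (H : Euc (n + 1) → ℝ) (hHC : Continuous H)
    (ε : ℝ) (hε : 0 < ε) (p' : Euc n) (u : Euc (n + 1) → ℝ)
    (huLip : ∃ K : NNReal, LipschitzOnWith K u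
      {x : Euc (n + 1) | (∑ i : Fin n, (x i.castSucc) ^ 2) < 1 ∧
        x (Fin.last n) ∈ Ioc (-1 : ℝ) 0})
    (husub : ∀ x₀ : Euc (n + 1), ∀ φ : Euc (n + 1) → ℝ, ∀ ρ : ℝ,
      SubTest {x : Euc (n + 1) | (∑ i : Fin n, (x i.castSucc) ^ 2) < 1 ∧
          x (Fin.last n) ∈ Ioo (-1 : ℝ) 0} u x₀ φ ρ →
        H (gradient φ x₀) ≤ 0)
    (hbdry : ∀ x : Euc (n + 1), (∑ i : Fin n, (x i.castSucc) ^ 2) < 1 →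
      x (Fin.last n) = 0 →
      u x ≤ u 0 + (1 / (2 * ε)) * (∑ i : Fin n, (x i.castSucc) ^ 2) +
        ∑ i : Fin n, p' i * x i.castSucc) :
    ∃ q : Euc (n + 1), (∀ i : Fin n, q i.castSucc = p' i) ∧ H q ≤ 0 := by
  classical
  obtain ⟨K₀, hLip⟩ := huLip
  set K : ℝ := (K₀ : ℝ) with hKdef
  have hK0 : 0 ≤ K := K₀.coe_nonneg
  set c₁ : ℝ := 1/(2*ε) + 1 with hc₁def
  have hc₁pos : 0 < c₁ := by
    have h : 0 < 1/(2*ε) := by positivity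
    rw [hc₁def]; linarith only [h]
  set A : ℝ := K + 1 with hAdef
  set D : ℝ := A + K with hDdef
  have hD1 : 1 ≤ D := by rw [hDdef, hAdef]; linarith only [hK0]
  set M₀ : ℝ := D^2 + 2*D + 4 with hM₀def
  clear_value K c₁ A D M₀
  -- continuity of coordinates and basic functions
  have hcoordC : ∀ j : Fin (n+1), Continuous (fun y : Euc (n+1) => y j) := by
    intro j
    have := (EuclideanSpace.proj (𝕜 := ℝ) j : Euc (n+1) →L[ℝ] ℝ).continuous
    convert this using 2 with y
    rfl
  have hScont : Continuous (fun x : Euc (n+1) => ∑ i : Fin n, (x i.castSucc)^2) :=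
    continuous_finset_sum _ fun i _ => ((hcoordC i.castSucc).pow 2)
  have hTcont : Continuous (fun x : Euc (n+1) => ∑ i : Fin n, p' i * x i.castSucc) :=
    continuous_finset_sum _ fun i _ => continuous_const.mul (hcoordC i.castSucc)
  -- the compact cylinder
  set Cr : Set (Euc (n+1)) := {x : Euc (n+1) | (∑ i : Fin n, (x i.castSucc)^2) ≤ 1/4 ∧
      x (Fin.last n) ∈ Icc (-(1/2) : ℝ) 0} with hCrdef
  have hCrclosed : IsClosed Cr := by
    have h1 : Cr = (fun x : Euc (n+1) => ∑ i : Fin n, (x i.castSucc)^2) ⁻¹' (Iic (1/4)) ∩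
        (fun x : Euc (n+1) => x (Fin.last n)) ⁻¹' (Icc (-(1/2) : ℝ) 0) := rfl
    rw [h1]
    exact (isClosed_Iic.preimage hScont).inter (isClosed_Icc.preimage (hcoordC _))
  have hCrsubB : Cr ⊆ closedBall 0 1 := by
    intro x hx
    obtain ⟨h1, h2⟩ := hx
    rw [mem_closedBall, dist_zero_right, EuclideanSpace.norm_eq]
    have hsum : (∑ j : Fin (n+1), ‖x j‖^2) ≤ 1 := by
      rw [Fin.sum_univ_castSucc]
      have h3 : ∀ j : Fin (n+1), ‖x j‖^2 = (x j)^2 := fun j => by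
        rw [Real.norm_eq_abs, sq_abs]
      rw [h3]
      rw [show (∑ i : Fin n, ‖x i.castSucc‖^2) = ∑ i : Fin n, (x i.castSucc)^2 from
        Finset.sum_congr rfl fun i _ => h3 i.castSucc]
      nlinarith only [h1, h2.1, h2.2]
    calc Real.sqrt (∑ j : Fin (n+1), ‖x j‖^2) ≤ Real.sqrt 1 := Real.sqrt_le_sqrt hsum
      _ = 1 := Real.sqrt_one
  have hCrcpt : IsCompact Cr := (isCompact_closedBall (0 : Euc (n+1)) 1).of_isClosed_subset
    hCrclosed hCrsubB
  have hCrSlip : ∀ x ∈ Cr, (∑ i : Fin n, (x i.castSucc)^2) < 1 ∧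
      x (Fin.last n) ∈ Ioc (-1 : ℝ) 0 := by
    intro x hx
    exact ⟨lt_of_le_of_lt hx.1 (by norm_num), ⟨by have h := hx.2.1; linarith only [h], hx.2.2⟩⟩
  have hucont : ContinuousOn u Cr := hLip.continuousOn.mono (fun x hx => hCrSlip x hx)
  have hLipIneq : ∀ x y : Euc (n+1),
      ((∑ i : Fin n, (x i.castSucc)^2) < 1 ∧ x (Fin.last n) ∈ Ioc (-1 : ℝ) 0) →
      ((∑ i : Fin n, (y i.castSucc)^2) < 1 ∧ y (Fin.last n) ∈ Ioc (-1 : ℝ) 0) →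
      u x ≤ u y + K * dist x y := by
    intro x y hx hy
    rw [hKdef]
    have h := hLip.dist_le_mul x hx y hy
    rw [Real.dist_eq] at h
    have h2 := le_abs_self (u x - u y)
    have h3 := h2.trans h
    linarith only [h3]
  have h0mem : (∑ i : Fin n, ((0 : Euc (n+1)) i.castSucc)^2) < 1 ∧
      (0 : Euc (n+1)) (Fin.last n) ∈ Ioc (-1 : ℝ) 0 := by
    constructor
    · simp
    · simp
  -- Key step: for each large m produce a gradient with controlled entries
  have key : ∀ m : ℝ, M₀ ≤ m → ∃ q : Euc (n+1), H q ≤ 0 ∧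
      q (Fin.last n) ∈ Icc (A - 2*D) A ∧
      ∀ i : Fin n, (q i.castSucc - p' i)^2 ≤ c₁^2 * D^2 / m := by
    intro m hm
    have hm4 : 4 ≤ m := by
      have h1 : 4 ≤ M₀ := by rw [hM₀def]; nlinarith only [hD1, sq_nonneg D]
      linarith only [h1, hm]
    have hm0 : (0:ℝ) < m := by linarith
    set ψ : Euc (n+1) → ℝ := fun y => u 0 + c₁ * (∑ i : Fin n, (y i.castSucc)^2) +
        (∑ i : Fin n, p' i * y i.castSucc) + A * y (Fin.last n) + m * (y (Fin.last n))^2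
      with hψdef
    have hψcont : Continuous ψ := by
      rw [hψdef]
      exact ((((continuous_const.add (continuous_const.mul hScont)).add hTcont).add
        (continuous_const.mul (hcoordC _))).add
        (continuous_const.mul ((hcoordC _).pow 2)))
    set w : Euc (n+1) → ℝ := fun y => u y - ψ y with hwdef
    have hwcont : ContinuousOn w Cr := hucont.sub hψcont.continuousOn
    have hCrne : Cr.Nonempty := by
      refine ⟨0, ⟨?_, ?_⟩⟩
      · simp
      · constructor <;> simp
    obtain ⟨z, hzCr, hzmax'⟩ := hCrcpt.exists_isMaxOn hCrne hwcont
    have hzmax : ∀ y ∈ Cr, w y ≤ w z := fun y hy => hzmax' hy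
    -- universal upper bound for w on Cr
    have hub : ∀ x ∈ Cr, w x ≤ -(∑ i : Fin n, (x i.castSucc)^2) +
        D * (-(x (Fin.last n))) - m * (x (Fin.last n))^2 := by
      intro x hx
      set y : Euc (n+1) := x - EuclideanSpace.single (Fin.last n) (x (Fin.last n)) with hydef
      have hyc : ∀ i : Fin n, y i.castSucc = x i.castSucc := by
        intro i
        rw [hydef]
        simp [EuclideanSpace.single_apply, (Fin.castSucc_lt_last i).ne]
      have hyN : y (Fin.last n) = 0 := by
        rw [hydef]; simp [EuclideanSpace.single_apply]
      have hyS : (∑ i : Fin n, (y i.castSucc)^2) = ∑ i : Fin n, (x i.castSucc)^2 :=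
        Finset.sum_congr rfl (fun i _ => by rw [hyc i])
      have hyT : (∑ i : Fin n, p' i * y i.castSucc) = ∑ i : Fin n, p' i * x i.castSucc :=
        Finset.sum_congr rfl (fun i _ => by rw [hyc i])
      have hxmem := hCrSlip x hx
      have hymem : (∑ i : Fin n, (y i.castSucc)^2) < 1 ∧
          y (Fin.last n) ∈ Ioc (-1 : ℝ) 0 := by
        refine ⟨by rw [hyS]; exact hxmem.1, ?_⟩
        rw [hyN]; constructor <;> norm_num
      have hdist : dist x y = -(x (Fin.last n)) := by
        rw [dist_eq_norm]
        have hxy : x - y = EuclideanSpace.single (Fin.last n) (x (Fin.last n)) := by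
          rw [hydef, sub_sub_cancel]
        rw [hxy, EuclideanSpace.norm_single, Real.norm_eq_abs, abs_of_nonpos hx.2.2]
      have h1 : u x ≤ u y + K * (-(x (Fin.last n))) := by
        rw [← hdist]; exact hLipIneq x y hxmem hymem
      have h2 := hbdry y (by rw [hyS]; exact hxmem.1) hyN
      rw [hyS, hyT] at h2
      have h3 : c₁ * (∑ i : Fin n, (x i.castSucc)^2) =
          (1/(2*ε)) * (∑ i : Fin n, (x i.castSucc)^2) + (∑ i : Fin n, (x i.castSucc)^2) := by
        rw [hc₁def]; ring
      have h4 : D * (-(x (Fin.last n))) = K * (-(x (Fin.last n))) + A * (-(x (Fin.last n))) := by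
        rw [hDdef]; ring
      have hgen : ∀ ux uy S T N : ℝ, ux ≤ uy + K * -N → uy ≤ u 0 + 1/(2*ε)*S + T →
          ux - (u 0 + c₁ * S + T + A * N + m * N^2) ≤ -S + D * -N - m * N^2 := by
        intro ux uy S T N ha hb
        rw [hDdef, hAdef, hc₁def]
        linarith only [ha, hb]
      simp only [hwdef, hψdef]
      exact hgen (u x) (u y) _ _ _ h1 h2
    -- lower bound at the comparison point z₀
    set τ : ℝ := 1/(2*m) with hτdef
    have hτpos : 0 < τ := by rw [hτdef]; positivity
    have hτle : τ ≤ 1/8 := by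
      rw [hτdef, div_le_div_iff₀ (by linarith only [hm0] : (0:ℝ) < 2*m) (by norm_num)]
      linarith only [hm4]
    set z₀ : Euc (n+1) := EuclideanSpace.single (Fin.last n) (-τ) with hz₀def
    have hz₀c : ∀ i : Fin n, z₀ i.castSucc = 0 := by
      intro i; rw [hz₀def]; simp [EuclideanSpace.single_apply, (Fin.castSucc_lt_last i).ne]
    have hz₀N : z₀ (Fin.last n) = -τ := by rw [hz₀def]; simp [EuclideanSpace.single_apply]
    have hz₀S : (∑ i : Fin n, (z₀ i.castSucc)^2) = 0 :=
      Finset.sum_eq_zero fun i _ => by rw [hz₀c i]; ring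
    have hz₀T : (∑ i : Fin n, p' i * z₀ i.castSucc) = 0 :=
      Finset.sum_eq_zero fun i _ => by rw [hz₀c i]; ring
    have hz₀Cr : z₀ ∈ Cr := by
      refine ⟨by rw [hz₀S]; norm_num, ?_⟩
      rw [hz₀N]; constructor <;> [linarith only [hτle]; linarith only [hτpos]]
    have hz₀mem := hCrSlip z₀ hz₀Cr
    have hd : dist (0 : Euc (n+1)) z₀ = τ := by
      rw [dist_eq_norm, zero_sub, norm_neg, hz₀def, EuclideanSpace.norm_single,
        Real.norm_eq_abs, abs_neg, abs_of_pos hτpos]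
    have h5 : u 0 ≤ u z₀ + K * τ := by
      rw [← hd]; exact hLipIneq 0 z₀ h0mem hz₀mem
    have hψz₀ : ψ z₀ = u 0 + A * (-τ) + m * τ^2 := by
      simp only [hψdef, hz₀S, hz₀T, hz₀N]; ring
    have hτeq : (A - K) * τ - m * τ^2 = 1/(4*m) := by
      rw [hAdef, hτdef]; field_simp; ring
    clear_value τ
    have hlb : 1/(4*m) ≤ w z₀ := by
      simp only [hwdef]
      rw [hψz₀, ← hτeq]
      linarith only [h5]
    have hwz : 1/(4*m) ≤ w z := le_trans hlb (hzmax z₀ hz₀Cr)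
    set t : ℝ := -(z (Fin.last n)) with htdef
    have hNz : z (Fin.last n) = -t := by rw [htdef]; ring
    have hkey : 1/(4*m) ≤ -(∑ i : Fin n, (z i.castSucc)^2) + D * t - m * t^2 := by
      have h := hwz.trans (hub z hzCr)
      rw [htdef]
      nlinarith only [h]
    have hkey2 : 1 ≤ (-(∑ i : Fin n, (z i.castSucc)^2) + D * t - m * t^2) * (4*m) :=
      (div_le_iff₀ (by linarith : (0:ℝ) < 4*m)).mp hkey
    have hS0 : (0:ℝ) ≤ ∑ i : Fin n, (z i.castSucc)^2 :=
      Finset.sum_nonneg fun i _ => sq_nonneg _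
    have ht0 : 0 ≤ t := by rw [htdef]; linarith only [hzCr.2.2]
    clear_value t
    have htpos : 0 < t := by
      by_contra hcon
      push_neg at hcon
      nlinarith only [hkey2, hS0, hm0,
        mul_nonneg (by linarith only [hD1] : (0:ℝ) ≤ D) (by linarith only [hcon] : 0 ≤ -t),
        mul_nonneg hm0.le (sq_nonneg t)]
    have h4m' : 0 < 1/(4*m) := by positivity
    have hQ : 0 < t * (D - m*t) := by nlinarith only [hkey, hS0, h4m']
    have hmtD : m * t < D := by
      by_contra hcon
      push_neg at hcon
      have h6 : t * (D - m*t) ≤ 0 :=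
        mul_nonpos_of_nonneg_of_nonpos ht0 (by linarith only [hcon])
      linarith only [hQ, h6]
    have h4S : 4*m*(∑ i : Fin n, (z i.castSucc)^2) ≤ D^2 - 1 := by
      nlinarith only [hkey2, sq_nonneg (D - 2*m*t), hm0, hS0]
    have hSlt : (∑ i : Fin n, (z i.castSucc)^2) < 1/4 := by
      have hMv : M₀ = D^2 + 2*D + 4 := hM₀def
      nlinarith only [h4S, hm, hD1, hm0, hS0, hMv]
    have ht12 : t < 1/2 := by
      have hMv : M₀ = D^2 + 2*D + 4 := hM₀def
      have h2D : 2*D < m := by nlinarith only [sq_nonneg D, hm, hMv]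
      by_contra hcon
      push_neg at hcon
      have hp : m/2 ≤ m*t := by nlinarith only [hcon, hm0]
      linarith only [hp, h2D, hmtD]
    -- the max point is interior: pick a ball
    set U : Set (Euc (n+1)) := (fun x : Euc (n+1) => ∑ i : Fin n, (x i.castSucc)^2) ⁻¹'
        (Iio (1/4)) ∩ (fun x : Euc (n+1) => x (Fin.last n)) ⁻¹' (Ioo (-(1/2) : ℝ) 0)
      with hUdef
    have hUopen : IsOpen U := (isOpen_Iio.preimage hScont).inter (isOpen_Ioo.preimage (hcoordC _))
    have hzU : z ∈ U := by
      refine ⟨hSlt, ?_⟩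
      rw [mem_preimage, mem_Ioo, hNz]
      constructor <;> [linarith only [ht12]; linarith only [htpos]]
    obtain ⟨ρ, hρpos, hρsub⟩ := Metric.isOpen_iff.mp hUopen z hzU
    set φ : Euc (n+1) → ℝ := fun y => (u 0 + (u z - ψ z)) + c₁ * (∑ i : Fin n, (y i.castSucc)^2) +
        (∑ i : Fin n, p' i * y i.castSucc) + A * y (Fin.last n) + m * (y (Fin.last n))^2
      with hφdef
    have hφψ : ∀ y, φ y = ψ y + (u z - ψ z) := by
      intro y; simp only [hφdef, hψdef]; ring
    have hsub : SubTest {x : Euc (n + 1) | (∑ i : Fin n, (x i.castSucc) ^ 2) < 1 ∧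
        x (Fin.last n) ∈ Ioo (-1 : ℝ) 0} u z φ ρ := by
      refine ⟨hρpos, ?_, (contDiff_phi _ _ _ _ _).contDiffOn, ?_, ?_⟩
      · intro y hy
        have hyU := hρsub hy
        have h1 : (∑ i : Fin n, (y i.castSucc)^2) < 1/4 := hyU.1
        have h2 : y (Fin.last n) ∈ Ioo (-(1/2) : ℝ) 0 := hyU.2
        exact ⟨by linarith only [h1], ⟨by have h := h2.1; linarith only [h], h2.2⟩⟩
      · intro y hy
        have hyU := hρsub hy
        have h1 : (∑ i : Fin n, (y i.castSucc)^2) < 1/4 := hyU.1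
        have h2 : y (Fin.last n) ∈ Ioo (-(1/2) : ℝ) 0 := hyU.2
        have hyCr : y ∈ Cr := ⟨le_of_lt h1, ⟨le_of_lt h2.1, le_of_lt h2.2⟩⟩
        have h3 := hzmax y hyCr
        simp only [hwdef] at h3
        rw [hφψ y]
        linarith only [h3]
      · rw [hφψ z]; ring
    have h0 := husub z φ ρ hsub
    have hgrad : gradient φ z = gvec c₁ A m p' z :=
      HasGradientAt.gradient (hasGradientAt_phi (u 0 + (u z - ψ z)) c₁ A m p' z)
    rw [hgrad] at h0
    refine ⟨gvec c₁ A m p' z, h0, ?_, ?_⟩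
    · rw [gvec_last, hNz]
      constructor
      · linarith only [hmtD]
      · linarith only [mul_nonneg hm0.le ht0]
    · intro i
      rw [gvec_castSucc, le_div_iff₀ hm0]
      have hzi : (z i.castSucc)^2 ≤ ∑ j : Fin n, (z j.castSucc)^2 :=
        Finset.single_le_sum (f := fun j : Fin n => (z j.castSucc)^2) (fun j _ => sq_nonneg _) (Finset.mem_univ i)
      have hzi_m : 4*m*(z i.castSucc)^2 ≤ D^2 - 1 := by nlinarith only [hzi, h4S, hm0]
      nlinarith only [hzi_m, sq_nonneg c₁, hc₁pos]
  -- pass to the limit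
  have hM₀pos : 0 < M₀ := by rw [hM₀def]; nlinarith only [hD1, sq_nonneg D]
  have hexq : ∀ k : ℕ, ∃ q : Euc (n+1), H q ≤ 0 ∧ q (Fin.last n) ∈ Icc (A - 2*D) A ∧
      ∀ i : Fin n, (q i.castSucc - p' i)^2 ≤ c₁^2*D^2/(M₀ + k) :=
    fun k => key (M₀ + k) (by linarith only [Nat.cast_nonneg (α := ℝ) k])
  choose q hq1 hq2 hq3 using hexq
  obtain ⟨pn, _hpn, σ, hσ, hσtend⟩ :=
    (isCompact_Icc (a := A - 2*D) (b := A)).tendsto_subseq hq2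
  have hcl : ∀ i : Fin n, Tendsto (fun k => q k i.castSucc) atTop (𝓝 (p' i)) := by
    intro i
    have hb : Tendsto (fun k : ℕ => c₁^2*D^2/(M₀ + k)) atTop (𝓝 0) :=
      Tendsto.div_atTop tendsto_const_nhds
        (tendsto_atTop_add_const_left _ M₀ tendsto_natCast_atTop_atTop)
    have h2 : Tendsto (fun k => (q k i.castSucc - p' i)^2) atTop (𝓝 0) :=
      squeeze_zero (fun k => sq_nonneg _) (fun k => hq3 k i) hb
    have h3 : Tendsto (fun k => |q k i.castSucc - p' i|) atTop (𝓝 0) := by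
      have h := (Real.continuous_sqrt.tendsto 0).comp h2
      simpa [Function.comp_def, Real.sqrt_sq_eq_abs] using h
    have h4 : Tendsto (fun k => q k i.castSucc - p' i) atTop (𝓝 0) := by
      rw [tendsto_zero_iff_abs_tendsto_zero]; exact h3
    have h5 := h4.add_const (p' i)
    simpa using h5
  set qlim : Euc (n+1) := (WithLp.equiv 2 (Fin (n+1) → ℝ)).symm
      (Fin.snoc (fun i => p' i) pn) with hqlimdef
  have hqlim_cs : ∀ i : Fin n, qlim i.castSucc = p' i := by
    intro i; rw [hqlimdef]; simp [WithLp.equiv_symm_apply, PiLp.toLp_apply]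
  have hqlim_last : qlim (Fin.last n) = pn := by
    rw [hqlimdef]; simp [WithLp.equiv_symm_apply, PiLp.toLp_apply]
  have hfull : Tendsto (fun k => q (σ k)) atTop (𝓝 qlim) := by
    have h6 : Tendsto (fun k => (WithLp.equiv 2 (Fin (n+1) → ℝ)) (q (σ k))) atTop
        (𝓝 ((WithLp.equiv 2 (Fin (n+1) → ℝ)) qlim)) := by
      rw [tendsto_pi_nhds]
      intro j
      refine Fin.lastCases ?_ ?_ j
      · simp only [WithLp.equiv_apply, hqlim_last]
        exact hσtend
      · intro i
        simp only [WithLp.equiv_apply, hqlim_cs]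
        exact (hcl i).comp (hσ.tendsto_atTop)
    have h7 := (((PiLp.continuousLinearEquiv 2 ℝ
      (fun _ : Fin (n+1) => ℝ)).symm.continuous.tendsto _).comp h6)
    simpa [PiLp.coe_symm_continuousLinearEquiv, Function.comp_def] using h7
  refine ⟨qlim, hqlim_cs, ?_⟩
  exact le_of_tendsto ((hHC.tendsto qlim).comp hfull) (Eventually.of_forall fun k => hq1 (σ k))
end
end
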